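/- arXiv:1805.08134 — 3 statements merged into one kernel-verified Lean document; each statement's English description precedes it below -/
import Mathlib

section
/- Let S be a minimally spanning set and fix a positive definite prior Σ⁰. For each t ∈ ℕ let W(t) := min{ V_{Σ⁰}(q) : q ∈ ℕ^N, q_i = 0 for all i ∉ S, Σᵢ qᵢ = t }. Then t·W(t) → φ(S)² as t → ∞; that is, under optimal sampling restricted to S, the minimum achievable posterior variance after t observations is asymptotic to φ(S)²/t. -/
open Matrix Finset Filter Topology

noncomputable section

namespace LearningTraps

variable {K N : ℕ}

/-- The information matrix `Σᵢ qᵢ · cᵢ cᵢᵀ`. -/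
def infoMat (c : Fin N → Fin K → ℝ) (q : Fin N → ℝ) : Matrix (Fin K) (Fin K) ℝ :=
  ∑ i, q i • Matrix.vecMulVec (c i) (c i)

/-- Posterior variance `V_Σ(q) = [(Σ⁻¹ + Σᵢ qᵢ cᵢcᵢᵀ)⁻¹]₁₁`. -/
def postVar (hK : 0 < K) (c : Fin N → Fin K → ℝ)
    (Cov : Matrix (Fin K) (Fin K) ℝ) (q : Fin N → ℝ) : ℝ :=
  (Cov⁻¹ + infoMat c q)⁻¹ ⟨0, hK⟩ ⟨0, hK⟩

/-- Posterior variance at integer signal counts. -/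
def pv (hK : 0 < K) (c : Fin N → Fin K → ℝ)
    (Cov : Matrix (Fin K) (Fin K) ℝ) (q : Fin N → ℕ) : ℝ :=
  postVar hK c Cov fun i => (q i : ℝ)

/-- First standard basis vector of `ℝ^K`. -/
def e1 (hK : 0 < K) : Fin K → ℝ := Pi.single ⟨0, hK⟩ 1

/-- `S` is spanning: `e₁` lies in the span of `{cᵢ : i ∈ S}`. -/
def Spanning (hK : 0 < K) (c : Fin N → Fin K → ℝ) (S : Finset (Fin N)) : Prop :=
  e1 hK ∈ Submodule.span ℝ (c '' ↑S)

/-- `S` is minimally spanning. -/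
def MinSpanning (hK : 0 < K) (c : Fin N → Fin K → ℝ) (S : Finset (Fin N)) : Prop :=
  Spanning hK c S ∧ ∀ T ⊂ S, ¬ Spanning hK c T

/-- `β` represents `e₁` using only signals in `S`. -/
def IsRep (hK : 0 < K) (c : Fin N → Fin K → ℝ) (S : Finset (Fin N)) (β : Fin N → ℝ) : Prop :=
  (∀ i ∉ S, β i = 0) ∧ ∑ i, β i • c i = e1 hK

open Classical in
/-- The coefficients `β^S` (unique when `S` is minimally spanning). -/
def betaVec (hK : 0 < K) (c : Fin N → Fin K → ℝ) (S : Finset (Fin N)) : Fin N → ℝ :=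
  if h : ∃ β, IsRep hK c S β then h.choose else 0

/-- `φ(S) = Σ_{i∈S} |β^S_i|`. -/
def phi (hK : 0 < K) (c : Fin N → Fin K → ℝ) (S : Finset (Fin N)) : ℝ :=
  ∑ i, |betaVec hK c S i|

/-- The frequency vector `λ^S`. -/
def freq (hK : 0 < K) (c : Fin N → Fin K → ℝ) (S : Finset (Fin N)) : Fin N → ℝ :=
  fun i => |betaVec hK c S i| / phi hK c S

/-- The Unique Minimizer assumption: `Sstar` is the unique minimizer of `φ`
among minimally spanning sets. -/
def UniqueMin (hK : 0 < K) (c : Fin N → Fin K → ℝ) (Sstar : Finset (Fin N)) : Prop :=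
  MinSpanning hK c Sstar ∧
    ∀ S, MinSpanning hK c S → S ≠ Sstar → phi hK c Sstar < phi hK c S

/-- A `t`-optimal division of observations. -/
def TOptimal (hK : 0 < K) (c : Fin N → Fin K → ℝ) (Cov : Matrix (Fin K) (Fin K) ℝ)
    (t : ℕ) (q : Fin N → ℕ) : Prop :=
  (∑ i, q i) = t ∧ ∀ q' : Fin N → ℕ, (∑ i, q' i) = t → pv hK c Cov q ≤ pv hK c Cov q'

/-- A greedy (myopic) acquisition sequence. -/
def Greedy (hK : 0 < K) (c : Fin N → Fin K → ℝ) (Cov : Matrix (Fin K) (Fin K) ℝ)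
    (m : ℕ → Fin N → ℕ) : Prop :=
  m 0 = 0 ∧ ∀ t, ∃ i, m (t + 1) = m t + Pi.single i 1 ∧
    ∀ j, pv hK c Cov (m t + Pi.single i 1) ≤ pv hK c Cov (m t + Pi.single j 1)

open Classical in
/-- The set `A̅` of all signals whose coefficient vector lies in the span of `{cⱼ : j ∈ A}`. -/
def subClosure (c : Fin N → Fin K → ℝ) (A : Finset (Fin N)) : Finset (Fin N) :=
  Finset.univ.filter fun i => c i ∈ Submodule.span ℝ (c '' ↑A)

/-- `S` is subspace-optimal: it uniquely minimizes `φ` among minimally spanning subsets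
of its own subspace closure. -/
def SubspaceOptimal (hK : 0 < K) (c : Fin N → Fin K → ℝ) (S : Finset (Fin N)) : Prop :=
  MinSpanning hK c S ∧
    ∀ T ⊆ subClosure c S, MinSpanning hK c T → T ≠ S → phi hK c S < phi hK c T

/-- The asymptotic posterior variance `V*`, valued in `[0,∞]`. -/
def Vstar (hK : 0 < K) (c : Fin N → Fin K → ℝ) (l : Fin N → ℝ) : ENNReal :=
  ⨆ (ε : ℝ) (_ : 0 < ε),
    ENNReal.ofReal ((infoMat c l + ε • (1 : Matrix (Fin K) (Fin K) ℝ))⁻¹ ⟨0, hK⟩ ⟨0, hK⟩)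

/-!
Let `β = β^S`, `φ = φ(S)` and `J(q) = Σᵢ qᵢ cᵢcᵢᵀ`, so that `V(q) = e₁ ⬝ᵥ (Σ⁻¹ + J(q))⁻¹ *ᵥ e₁`.
Since the `cᵢ`, `i ∈ S`, are linearly independent, any values of `cᵢ ⬝ᵥ v` on `S` can be
prescribed. For `cᵢ ⬝ᵥ v = sign βᵢ / φ` we get `e₁ ⬝ᵥ v = 1` and `v ⬝ᵥ J(q) *ᵥ v = t / φ²` when
`q` is supported on `S` with total `t`, so Cauchy–Schwarz in the inner product of `Σ⁻¹ + J(q)`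
gives `V(q) ≥ 1 / (v ⬝ᵥ Σ⁻¹ *ᵥ v + t / φ²)`. Conversely, if `qᵢ > 0` on `S`, then
`cᵢ ⬝ᵥ w = βᵢ / qᵢ` gives `J(q) *ᵥ w = e₁`, whence `V(q) ≤ e₁ ⬝ᵥ w = Σᵢ βᵢ² / qᵢ`; rounding
`t λ^S` to integers makes this `φ² / t + O(1 / t²)`.
-/

section QuadraticForm

variable {n : Type*} [Fintype n]

theorem _root_.Matrix.IsHermitian.dotProduct_mulVec_comm {J : Matrix n n ℝ} (hJ : J.IsHermitian)
    (x y : n → ℝ) : x ⬝ᵥ J *ᵥ y = y ⬝ᵥ J *ᵥ x := by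
  rw [← dotProduct_transpose_mulVec J x y, ← conjTranspose_eq_transpose_of_trivial, hJ.eq]

variable [DecidableEq n]

theorem _root_.Matrix.PosDef.mulVec_inv_mulVec {M : Matrix n n ℝ} (hM : M.PosDef) (x : n → ℝ) :
    M *ᵥ M⁻¹ *ᵥ x = x := by
  rw [mulVec_mulVec, mul_nonsing_inv _ ((isUnit_iff_isUnit_det M).mp hM.isUnit), one_mulVec]

/-- The gap is `(v - M⁻¹ *ᵥ x) ⬝ᵥ M *ᵥ (v - M⁻¹ *ᵥ x)`. -/
theorem _root_.Matrix.PosDef.two_mul_dotProduct_sub_le {M : Matrix n n ℝ} (hM : M.PosDef)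
    (x v : n → ℝ) : 2 * (x ⬝ᵥ v) - v ⬝ᵥ M *ᵥ v ≤ x ⬝ᵥ M⁻¹ *ᵥ x := by
  set u := M⁻¹ *ᵥ x
  have hMu : M *ᵥ u = x := hM.mulVec_inv_mulVec x
  have hsq : 0 ≤ (v - u) ⬝ᵥ M *ᵥ (v - u) := by
    simpa using hM.posSemidef.dotProduct_mulVec_nonneg (v - u)
  have huMv : u ⬝ᵥ M *ᵥ v = x ⬝ᵥ v := by
    rw [hM.isHermitian.dotProduct_mulVec_comm, hMu, dotProduct_comm]
  rw [mulVec_sub, dotProduct_sub, sub_dotProduct, sub_dotProduct, huMv, hMu,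
    dotProduct_comm v x, dotProduct_comm u x] at hsq
  linarith

theorem _root_.Matrix.PosDef.inv_le_dotProduct_inv_mulVec {M : Matrix n n ℝ} (hM : M.PosDef)
    {x v : n → ℝ} (hxv : x ⬝ᵥ v = 1) : (v ⬝ᵥ M *ᵥ v)⁻¹ ≤ x ⬝ᵥ M⁻¹ *ᵥ x := by
  have hv : v ≠ 0 := by rintro rfl; simp at hxv
  have hpos : 0 < v ⬝ᵥ M *ᵥ v := by simpa using hM.dotProduct_mulVec_pos hv
  have h := hM.two_mul_dotProduct_sub_le x ((v ⬝ᵥ M *ᵥ v)⁻¹ • v)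
  rw [dotProduct_smul, mulVec_smul, dotProduct_smul, smul_dotProduct, hxv] at h
  simp only [smul_eq_mul] at h
  field_simp at h
  rw [inv_le_iff_one_le_mul₀' hpos]
  linarith

theorem _root_.Matrix.PosDef.dotProduct_inv_mulVec_le {M J : Matrix n n ℝ} (hM : M.PosDef)
    (hJ : J.PosSemidef) (hMJ : (M - J).PosSemidef) {x w : n → ℝ} (hw : J *ᵥ w = x) :
    x ⬝ᵥ M⁻¹ *ᵥ x ≤ x ⬝ᵥ w := by
  set u := M⁻¹ *ᵥ x
  have hMu : M *ᵥ u = x := hM.mulVec_inv_mulVec x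
  have hsq : 0 ≤ (u - w) ⬝ᵥ J *ᵥ (u - w) := by
    simpa using hJ.dotProduct_mulVec_nonneg (u - w)
  have hJM : u ⬝ᵥ J *ᵥ u ≤ u ⬝ᵥ M *ᵥ u := by
    have := hMJ.dotProduct_mulVec_nonneg u
    rw [star_trivial, sub_mulVec, dotProduct_sub] at this
    linarith
  have hwJu : w ⬝ᵥ J *ᵥ u = x ⬝ᵥ u := by
    rw [hJ.isHermitian.dotProduct_mulVec_comm, hw, dotProduct_comm]
  rw [mulVec_sub, dotProduct_sub, sub_dotProduct, sub_dotProduct, hwJu, hw] at hsq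
  rw [hMu] at hJM
  simp only [dotProduct_comm u x, dotProduct_comm w x] at hsq hJM
  linarith

end QuadraticForm

theorem exists_dotProduct_eq_of_linearIndependent {R ι n : Type*} [Field R] [Fintype ι]
    [Fintype n] {b : ι → n → R} (hb : LinearIndependent R b) (a : ι → R) :
    ∃ w : n → R, ∀ i, b i ⬝ᵥ w = a i := by
  have hrank : (Matrix.of b).rank = Fintype.card ι := hb.rank_matrix
  have htop : LinearMap.range (Matrix.of b).mulVecLin = ⊤ :=
    Submodule.eq_top_of_finrank_eq (by rw [Module.finrank_fintype_fun_eq_card, ← hrank]; rfl)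
  obtain ⟨w, hw⟩ : a ∈ LinearMap.range (Matrix.of b).mulVecLin := htop ▸ Submodule.mem_top
  exact ⟨w, fun i => congrFun hw i⟩

theorem exists_nat_sum_eq_mul_sub_one_le {ι : Type*} [Fintype ι] [DecidableEq ι] {S : Finset ι}
    {p : ι → ℝ} (hp : ∀ i ∈ S, 0 ≤ p i) (hp1 : ∑ i ∈ S, p i = 1) (t : ℕ) :
    ∃ q : ι → ℕ, (∀ i ∉ S, q i = 0) ∧ ∑ i, q i = t ∧ ∀ i ∈ S, t * p i - 1 ≤ q i := by
  obtain ⟨i₀, hi₀⟩ := Finset.nonempty_of_sum_ne_zero (hp1.trans_ne one_ne_zero)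
  set f : ι → ℕ := fun i => if i ∈ S then ⌊t * p i⌋₊ else 0
  have hf : ∑ i, f i ≤ t := by
    have : (∑ i ∈ S, (⌊t * p i⌋₊ : ℝ)) ≤ t := calc
      _ ≤ ∑ i ∈ S, t * p i := Finset.sum_le_sum fun i hi =>
            Nat.floor_le (mul_nonneg t.cast_nonneg (hp i hi))
      _ = t := by rw [← Finset.mul_sum, hp1, mul_one]
    simp only [f, Finset.sum_ite_mem, Finset.univ_inter]
    exact_mod_cast this
  set q : ι → ℕ := f + Pi.single i₀ (t - ∑ j, f j)
  refine ⟨q, fun i hi => ?_, ?_, fun i hi => ?_⟩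
  · simp [q, f, hi, (ne_of_mem_of_not_mem hi₀ hi).symm]
  · simp only [q, Pi.add_apply, Finset.sum_add_distrib, Finset.sum_pi_single', Finset.mem_univ,
      if_true]
    omega
  · have hle : ⌊t * p i⌋₊ ≤ q i := by simp [q, f, hi]
    have hle' : (⌊t * p i⌋₊ : ℝ) ≤ q i := by exact_mod_cast hle
    linarith [Nat.sub_one_lt_floor (t * p i)]

theorem tendsto_natCast_mul_inv_add_div (a : ℝ) {b : ℝ} (hb : b ≠ 0) :
    Tendsto (fun t : ℕ => (t : ℝ) * (a + t / b)⁻¹) atTop (𝓝 b) := by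
  have h : Tendsto (fun t : ℕ => (a / t + b⁻¹)⁻¹) atTop (𝓝 b⁻¹⁻¹) :=
    (by simpa using (tendsto_const_div_atTop_nhds_zero_nat a).add_const b⁻¹ :
      Tendsto (fun t : ℕ => a / t + b⁻¹) atTop (𝓝 b⁻¹)).inv₀ (inv_ne_zero hb)
  rw [inv_inv] at h
  refine h.congr' ((eventually_gt_atTop 0).mono fun t ht => ?_)
  have ht : (t : ℝ) ≠ 0 := Nat.cast_ne_zero.mpr ht.ne'
  rw [show a / t + b⁻¹ = (a + t / b) / t by field_simp, inv_div, div_eq_mul_inv]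

section Signals

variable {hK : 0 < K} {c : Fin N → Fin K → ℝ} {S T : Finset (Fin N)}
  {Cov : Matrix (Fin K) (Fin K) ℝ}

theorem infoMat_mulVec (q : Fin N → ℝ) (y : Fin K → ℝ) :
    infoMat c q *ᵥ y = ∑ i, (q i * (c i ⬝ᵥ y)) • c i := by
  simp only [infoMat, sum_mulVec, smul_mulVec, vecMulVec_mulVec, op_smul_eq_smul, smul_smul]

theorem dotProduct_infoMat_mulVec (q : Fin N → ℝ) (x y : Fin K → ℝ) :
    x ⬝ᵥ infoMat c q *ᵥ y = ∑ i, q i * (c i ⬝ᵥ x) * (c i ⬝ᵥ y) := by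
  rw [infoMat_mulVec, dotProduct_sum]
  refine Finset.sum_congr rfl fun i _ => ?_
  rw [dotProduct_smul, smul_eq_mul, dotProduct_comm x]
  ring

theorem infoMat_posSemidef {q : Fin N → ℝ} (hq : 0 ≤ q) : (infoMat c q).PosSemidef :=
  posSemidef_sum _ fun i _ => (posSemidef_vecMulVec_self_star (c i)).smul (hq i)

theorem posDef_inv_add_infoMat (hCov : Cov.PosDef) {q : Fin N → ℝ} (hq : 0 ≤ q) :
    (Cov⁻¹ + infoMat c q).PosDef :=
  hCov.inv.add_posSemidef (infoMat_posSemidef hq)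

theorem pv_eq_dotProduct (q : Fin N → ℕ) :
    pv hK c Cov q = e1 hK ⬝ᵥ (Cov⁻¹ + infoMat c fun i => (q i : ℝ))⁻¹ *ᵥ e1 hK := by
  simp [pv, postVar, e1, mulVec_single, single_dotProduct]

theorem e1_ne_zero (hK : 0 < K) : e1 hK ≠ 0 := by
  simp [e1]

theorem pv_pos (hCov : Cov.PosDef) (q : Fin N → ℕ) : 0 < pv hK c Cov q := by
  simpa [pv_eq_dotProduct] using
    (posDef_inv_add_infoMat hCov fun i => (q i).cast_nonneg).inv.dotProduct_mulVec_pos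
      (e1_ne_zero hK)

theorem IsRep.spanning {γ : Fin N → ℝ} (h : IsRep hK c T γ) : Spanning hK c T := by
  rw [Spanning, ← h.2]
  refine Submodule.sum_mem _ fun i _ => ?_
  by_cases hi : i ∈ T
  · exact Submodule.smul_mem _ _ (Submodule.subset_span ⟨i, hi, rfl⟩)
  · simp [h.1 i hi]

theorem IsRep.e1_dotProduct {β : Fin N → ℝ} (h : IsRep hK c S β) (v : Fin K → ℝ) :
    e1 hK ⬝ᵥ v = ∑ i, β i * (c i ⬝ᵥ v) := by
  simp only [← h.2, sum_dotProduct, smul_dotProduct, smul_eq_mul]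

theorem Spanning.exists_isRep (h : Spanning hK c S) : ∃ β, IsRep hK c S β := by
  obtain ⟨l, hl, hsum⟩ := Finsupp.mem_span_image_iff_linearCombination ℝ |>.mp h
  refine ⟨l, fun i hi => (Finsupp.mem_supported' ℝ l).mp hl i hi, ?_⟩
  rw [← hsum, Finsupp.linearCombination_apply]
  exact (Finsupp.sum_fintype _ (fun i a => a • c i) fun i => zero_smul ℝ (c i)).symm

theorem Spanning.isRep_betaVec (h : Spanning hK c S) : IsRep hK c S (betaVec hK c S) := by
  rw [betaVec, dif_pos h.exists_isRep]
  exact h.exists_isRep.choose_spec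

theorem Spanning.sum_abs_betaVec (h : Spanning hK c S) :
    ∑ i ∈ S, |betaVec hK c S i| = phi hK c S :=
  Finset.sum_subset (Finset.subset_univ S) fun i _ hi => by simp [h.isRep_betaVec.1 i hi]

theorem Spanning.phi_pos (h : Spanning hK c S) : 0 < phi hK c S := by
  obtain ⟨i, -, hi⟩ := Finset.exists_ne_zero_of_sum_ne_zero (s := Finset.univ)
    (f := fun i => betaVec hK c S i • c i) (by rw [h.isRep_betaVec.2]; exact e1_ne_zero hK)
  exact Finset.sum_pos' (fun _ _ => abs_nonneg _)
    ⟨i, Finset.mem_univ i, abs_pos.mpr (left_ne_zero_of_smul hi)⟩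

namespace MinSpanning

theorem betaVec_ne_zero (hS : MinSpanning hK c S) {i : Fin N} (hi : i ∈ S) :
    betaVec hK c S i ≠ 0 := by
  intro h0
  refine hS.2 (S.erase i) (Finset.erase_ssubset hi) (IsRep.spanning ⟨fun j hj => ?_,
    hS.1.isRep_betaVec.2⟩)
  by_cases hji : j = i
  · rwa [hji]
  · exact hS.1.isRep_betaVec.1 j fun hj' => hj (Finset.mem_erase.mpr ⟨hji, hj'⟩)

/-- A dependent `cᵢ` could be dropped from `S` without shrinking the span. -/
theorem linearIndepOn (hS : MinSpanning hK c S) : LinearIndepOn ℝ c (S : Set (Fin N)) := by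
  rw [linearIndepOn_iff_notMem_span]
  intro i hi hspan
  refine hS.2 (S.erase i) (Finset.erase_ssubset hi) ?_
  have h := hS.1
  rwa [Spanning, ← Set.insert_sdiff_self_of_mem hi, Set.image_insert_eq,
    Submodule.span_insert_eq_span hspan, ← Finset.coe_erase] at h

theorem exists_dotProduct_eq (hS : MinSpanning hK c S) (a : Fin N → ℝ) :
    ∃ w : Fin K → ℝ, ∀ i ∈ S, c i ⬝ᵥ w = a i := by
  obtain ⟨w, hw⟩ := exists_dotProduct_eq_of_linearIndependent hS.linearIndepOn fun i => a i
  exact ⟨w, fun i hi => hw ⟨i, hi⟩⟩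

theorem freq_pos (hS : MinSpanning hK c S) {i : Fin N} (hi : i ∈ S) : 0 < freq hK c S i :=
  div_pos (abs_pos.mpr (hS.betaVec_ne_zero hi)) hS.1.phi_pos

theorem sum_freq (hS : MinSpanning hK c S) : ∑ i ∈ S, freq hK c S i = 1 := by
  simp only [freq]
  rw [← Finset.sum_div, hS.1.sum_abs_betaVec, div_self hS.1.phi_pos.ne']

theorem sum_sq_div_freq (hS : MinSpanning hK c S) :
    ∑ i ∈ S, betaVec hK c S i ^ 2 / freq hK c S i = phi hK c S ^ 2 := by
  have hterm : ∀ i ∈ S,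
      betaVec hK c S i ^ 2 / freq hK c S i = |betaVec hK c S i| * phi hK c S := by
    intro i hi
    have := abs_pos.mpr (hS.betaVec_ne_zero hi)
    simp only [freq]
    rw [← sq_abs]
    field_simp
  rw [Finset.sum_congr rfl hterm, ← Finset.sum_mul, hS.1.sum_abs_betaVec, sq]

theorem exists_inv_le_pv (hS : MinSpanning hK c S) (hCov : Cov.PosDef) :
    ∃ a : ℝ, ∀ q : Fin N → ℕ, (∀ i ∉ S, q i = 0) →
      (a + ((∑ i, q i : ℕ) : ℝ) / phi hK c S ^ 2)⁻¹ ≤ pv hK c Cov q := by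
  set β := betaVec hK c S
  set φ := phi hK c S
  have hφ : 0 < φ := hS.1.phi_pos
  obtain ⟨v, hv⟩ := hS.exists_dotProduct_eq fun i => β i / (|β i| * φ)
  have hβv : ∀ i, β i * (c i ⬝ᵥ v) = |β i| / φ := by
    intro i
    by_cases hi : i ∈ S
    · have hβ : β i ≠ 0 := hS.betaVec_ne_zero hi
      rw [hv i hi, ← mul_div_assoc, ← sq, ← sq_abs]
      field_simp
    · simp [β, hS.1.isRep_betaVec.1 i hi]
  have hsq : ∀ i ∈ S, (c i ⬝ᵥ v) * (c i ⬝ᵥ v) = 1 / φ ^ 2 := by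
    intro i hi
    have hβ : β i ≠ 0 := hS.betaVec_ne_zero hi
    rw [hv i hi, ← sq, div_pow, mul_pow, sq_abs]
    field_simp
  have hev : e1 hK ⬝ᵥ v = 1 := by
    rw [hS.1.isRep_betaVec.e1_dotProduct, Finset.sum_congr rfl fun i _ => hβv i,
      ← Finset.sum_div]
    exact div_self hφ.ne'
  refine ⟨v ⬝ᵥ Cov⁻¹ *ᵥ v, fun q hq => ?_⟩
  have hvMv : v ⬝ᵥ (Cov⁻¹ + infoMat c fun i => (q i : ℝ)) *ᵥ v
      = v ⬝ᵥ Cov⁻¹ *ᵥ v + ((∑ i, q i : ℕ) : ℝ) / φ ^ 2 := by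
    rw [add_mulVec, dotProduct_add, dotProduct_infoMat_mulVec, Nat.cast_sum, Finset.sum_div]
    congr 1
    refine Finset.sum_congr rfl fun i _ => ?_
    by_cases hi : i ∈ S
    · rw [mul_assoc, hsq i hi, mul_one_div]
    · simp [hq i hi]
  rw [pv_eq_dotProduct, ← hvMv]
  exact (posDef_inv_add_infoMat hCov fun i => (q i).cast_nonneg).inv_le_dotProduct_inv_mulVec hev

theorem pv_le_sum_sq_div (hS : MinSpanning hK c S) (hCov : Cov.PosDef) {q : Fin N → ℕ}
    (hq : ∀ i ∉ S, q i = 0) (hpos : ∀ i ∈ S, 0 < q i) :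
    pv hK c Cov q ≤ ∑ i ∈ S, betaVec hK c S i ^ 2 / q i := by
  have hrep := hS.1.isRep_betaVec
  set β := betaVec hK c S
  obtain ⟨w, hw⟩ := hS.exists_dotProduct_eq fun i => β i / q i
  have hqw : ∀ i, (q i : ℝ) * (c i ⬝ᵥ w) = β i := by
    intro i
    by_cases hi : i ∈ S
    · have : (q i : ℝ) ≠ 0 := Nat.cast_ne_zero.mpr (hpos i hi).ne'
      rw [hw i hi]
      field_simp
    · simp [hq i hi, hrep.1 i hi]
  have hJw : infoMat c (fun i => (q i : ℝ)) *ᵥ w = e1 hK := by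
    rw [infoMat_mulVec, ← hrep.2]
    simp only [hqw]
  have hCovJ :
      ((Cov⁻¹ + infoMat c fun i => (q i : ℝ)) - infoMat c fun i => (q i : ℝ)).PosSemidef := by
    simpa using hCov.inv.posSemidef
  rw [pv_eq_dotProduct]
  refine ((posDef_inv_add_infoMat hCov fun i => (q i).cast_nonneg).dotProduct_inv_mulVec_le
    (infoMat_posSemidef fun i => (q i).cast_nonneg) hCovJ hJw).trans_eq ?_
  rw [hrep.e1_dotProduct, ← Finset.sum_subset (Finset.subset_univ S) fun i _ hi => by
    simp [hrep.1 i hi]]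
  refine Finset.sum_congr rfl fun i hi => ?_
  rw [hw i hi]
  ring

theorem eventually_exists_mul_pv_le (hS : MinSpanning hK c S) (hCov : Cov.PosDef) :
    ∀ᶠ t : ℕ in atTop, ∃ q : Fin N → ℕ, (∀ i ∉ S, q i = 0) ∧ ∑ i, q i = t ∧
      t * pv hK c Cov q ≤ ∑ i ∈ S, betaVec hK c S i ^ 2 / (freq hK c S i - 1 / t) := by
  have hlarge : ∀ᶠ t : ℕ in atTop, ∀ i ∈ S, 1 < t * freq hK c S i :=
    (eventually_all_finset _).mpr fun i hi =>
      ((tendsto_natCast_atTop_atTop).atTop_mul_const (hS.freq_pos hi)).eventually_gt_atTop 1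
  filter_upwards [hlarge, eventually_gt_atTop 0] with t hlarge ht
  have ht : (0 : ℝ) < t := Nat.cast_pos.mpr ht
  obtain ⟨q, hq, hsum, hround⟩ := exists_nat_sum_eq_mul_sub_one_le
    (fun i hi => (hS.freq_pos hi).le) hS.sum_freq t
  have hfreq_sub : ∀ i ∈ S, 0 < freq hK c S i - 1 / t := fun i hi => by
    rw [sub_pos, div_lt_iff₀' ht]; exact hlarge i hi
  have hfreq_le : ∀ i ∈ S, freq hK c S i - 1 / t ≤ q i / t := fun i hi => by
    rw [le_div_iff₀ ht, sub_mul, one_div_mul_cancel ht.ne', mul_comm]; exact hround i hi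
  refine ⟨q, hq, hsum, ?_⟩
  calc (t : ℝ) * pv hK c Cov q
      ≤ t * ∑ i ∈ S, betaVec hK c S i ^ 2 / q i := by
        refine mul_le_mul_of_nonneg_left (hS.pv_le_sum_sq_div hCov hq fun i hi => ?_) ht.le
        exact (Nat.cast_pos (α := ℝ)).mp (by linarith [hround i hi, hlarge i hi])
    _ = ∑ i ∈ S, betaVec hK c S i ^ 2 / (q i / t) := by
        rw [Finset.mul_sum]
        exact Finset.sum_congr rfl fun i _ => by rw [div_div_eq_mul_div, mul_div_assoc']; ring
    _ ≤ _ := Finset.sum_le_sum fun i hi =>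
        div_le_div_of_nonneg_left (sq_nonneg _) (hfreq_sub i hi) (hfreq_le i hi)

theorem tendsto_sum_sq_div_freq_sub (hS : MinSpanning hK c S) :
    Tendsto (fun t : ℕ => ∑ i ∈ S, betaVec hK c S i ^ 2 / (freq hK c S i - 1 / t)) atTop
      (𝓝 (phi hK c S ^ 2)) := by
  rw [← hS.sum_sq_div_freq]
  refine tendsto_finsetSum _ fun i hi => tendsto_const_nhds.div ?_ (hS.freq_pos hi).ne'
  simpa using tendsto_const_nhds.sub (tendsto_one_div_atTop_nhds_zero_nat (𝕜 := ℝ))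

end MinSpanning

end Signals

theorem constrained_optimal_speed_general {K N : ℕ} (hK : 0 < K)
    (c : Fin N → Fin K → ℝ) (S : Finset (Fin N)) (hS : MinSpanning hK c S)
    (Cov : Matrix (Fin K) (Fin K) ℝ) (hCov : Cov.PosDef) :
    Filter.Tendsto
      (fun t : ℕ => (t : ℝ) *
        sInf {x : ℝ | ∃ q : Fin N → ℕ,
          (∀ i ∉ S, q i = 0) ∧ (∑ i, q i) = t ∧ pv hK c Cov q = x})
      Filter.atTop (𝓝 ((phi hK c S) ^ 2)) := by
  obtain ⟨a, hlower⟩ := hS.exists_inv_le_pv hCov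
  have hupper := hS.eventually_exists_mul_pv_le hCov
  refine tendsto_of_tendsto_of_tendsto_of_le_of_le'
    (tendsto_natCast_mul_inv_add_div a (pow_ne_zero 2 hS.1.phi_pos.ne'))
    hS.tendsto_sum_sq_div_freq_sub ?_ ?_
  · -- `hupper` also supplies the feasible point that `le_csInf` needs.
    filter_upwards [hupper] with t ht
    obtain ⟨q, hq, hsum, -⟩ := ht
    refine mul_le_mul_of_nonneg_left (le_csInf ⟨_, q, hq, hsum, rfl⟩ ?_) t.cast_nonneg
    rintro x ⟨q', hq', hsum', rfl⟩
    simpa [hsum'] using hlower q' hq'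
  · filter_upwards [hupper] with t ht
    obtain ⟨q, hq, hsum, hle⟩ := ht
    have hbdd : BddBelow {x : ℝ | ∃ q : Fin N → ℕ,
        (∀ i ∉ S, q i = 0) ∧ (∑ i, q i) = t ∧ pv hK c Cov q = x} :=
      ⟨0, by rintro x ⟨q', -, -, rfl⟩; exact (pv_pos hCov q').le⟩
    exact (mul_le_mul_of_nonneg_left (csInf_le hbdd ⟨q, hq, hsum, rfl⟩) t.cast_nonneg).trans hle

/-- Under optimal sampling restricted to a minimal spanning set `S`,
the minimum achievable posterior variance `W(t)` satisfies `t·W(t) → φ(S)²`. -/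
theorem constrained_optimal_speed {K N : ℕ} (hK : 0 < K) (hN : 0 < N)
    (c : Fin N → Fin K → ℝ) (S : Finset (Fin N)) (hS : MinSpanning hK c S)
    (Cov : Matrix (Fin K) (Fin K) ℝ) (hCov : Cov.PosDef) :
    Filter.Tendsto
      (fun t : ℕ => (t : ℝ) *
        sInf {x : ℝ | ∃ q : Fin N → ℕ,
          (∀ i ∉ S, q i = 0) ∧ (∑ i, q i) = t ∧ pv hK c Cov q = x})
      Filter.atTop (𝓝 ((phi hK c S) ^ 2)) :=
  constrained_optimal_speed_general hK c S hS Cov hCov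

end LearningTraps
end
end

section
/- Fix a positive definite prior Σ⁰ and λ ∈ [0,∞)^N. Then t·V_{Σ⁰}(t·λ) converges, as the real parameter t → ∞, to V*(λ) in [0,∞]. In particular, if the matrix Σᵢ λᵢ·cᵢcᵢᵀ is positive definite, then lim_{t→∞} t·V_{Σ⁰}(t·λ) = [(Σᵢ λᵢ·cᵢcᵢᵀ)⁻¹]₁₁, independently of the prior Σ⁰. -/
open Matrix Finset Filter Topology

noncomputable section

open scoped MatrixOrder ComplexOrder

namespace Matrix

section RCLike

variable {n 𝕜 : Type*} [RCLike 𝕜]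

theorem diag_le_diag_of_le {A B : Matrix n n 𝕜} (hAB : A ≤ B) (i : n) : A i i ≤ B i i := by
  simpa using (le_iff.mp hAB).diag_nonneg (i := i)

variable [Fintype n] [DecidableEq n]

theorem PosDef.inv_anti {P Q : Matrix n n 𝕜} (hP : P.PosDef) (hPQ : P ≤ Q) : Q⁻¹ ≤ P⁻¹ := by
  have hQ : Q.PosDef := by simpa using hP.add_posSemidef (le_iff.mp hPQ)
  have := hQ.isUnit.invertible
  have := hP.isUnit.invertible
  -- The two Schur complements of this block matrix are `Q - P` and `P⁻¹ - Q⁻¹`.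
  have hblock : (fromBlocks Q 1 1ᴴ P⁻¹).PosSemidef := by
    rw [PosDef.fromBlocks₂₂ _ _ hP.inv]
    simpa [inv_inv_of_invertible] using le_iff.mp hPQ
  rw [PosDef.fromBlocks₁₁ _ _ hQ] at hblock
  simpa [le_iff] using hblock

theorem PosDef.exists_smul_one_le {A : Matrix n n 𝕜} (hA : A.PosDef) :
    ∃ r : ℝ, 0 < r ∧ r • 1 ≤ A := by
  cases isEmpty_or_nonempty n
  · exact ⟨1, one_pos, by simp⟩
  have hpos := isStrictlyPositive_iff_posDef.mpr hA
  obtain ⟨r, hr, hrA⟩ := (CFC.exists_pos_algebraMap_le_iff hpos.isSelfAdjoint).mpr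
    fun x hx => hpos.spectrum_pos hx
  exact ⟨r, hr, by rwa [Algebra.algebraMap_eq_smul_one] at hrA⟩

theorem PosDef.exists_le_smul_one {A : Matrix n n 𝕜} (hA : A.PosDef) :
    ∃ r : ℝ, 0 < r ∧ A ≤ r • 1 := by
  obtain ⟨r, hr, hrA⟩ := hA.inv.exists_smul_one_le
  refine ⟨r⁻¹, inv_pos.mpr hr, ?_⟩
  have hinv : (r • 1 : Matrix n n 𝕜)⁻¹ = r⁻¹ • 1 :=
    inv_eq_left_inv (by rw [smul_mul_smul_comm, inv_mul_cancel₀ hr.ne', one_mul, one_smul])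
  have := hA.isUnit.invertible
  simpa [hinv, inv_inv_of_invertible] using (PosDef.one.smul hr).inv_anti hrA

end RCLike

section Real

variable {n : Type*} [Fintype n] [DecidableEq n] {M : Matrix n n ℝ}

theorem PosSemidef.inv_add_apply_anti (hM : M.PosSemidef) {A B : Matrix n n ℝ} (hA : A.PosDef)
    (hAB : A ≤ B) (i : n) : (M + B)⁻¹ i i ≤ (M + A)⁻¹ i i :=
  diag_le_diag_of_le ((PosDef.posSemidef_add hM hA).inv_anti (add_le_add_right hAB M)) i

theorem PosSemidef.antitoneOn_inv_add_smul_one_apply (hM : M.PosSemidef) (i : n) :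
    AntitoneOn (fun ε : ℝ => (M + ε • 1)⁻¹ i i) (Set.Ioi 0) := fun _ hε _ _ hεε' =>
  hM.inv_add_apply_anti (PosDef.one.smul hε) (smul_le_smul_of_nonneg_right hεε' zero_le_one) i

theorem PosSemidef.tendsto_ofReal_inv_add_smul_one_apply (hM : M.PosSemidef) (i : n) :
    Tendsto (fun ε : ℝ => ENNReal.ofReal ((M + ε • 1)⁻¹ i i)) (𝓝[>] 0)
      (𝓝 (⨆ (ε : ℝ) (_ : 0 < ε), ENNReal.ofReal ((M + ε • 1)⁻¹ i i))) := by
  have hanti := ENNReal.ofReal_mono.comp_antitoneOn (hM.antitoneOn_inv_add_smul_one_apply i)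
  simpa [sSup_image, Function.comp_def] using hanti.tendsto_nhdsGT (OrderTop.bddAbove _)

theorem PosSemidef.tendsto_ofReal_inv_add_inv_smul_apply (hM : M.PosSemidef)
    {A : Matrix n n ℝ} (hA : A.PosDef) (i : n) :
    Tendsto (fun t : ℝ => ENNReal.ofReal ((M + t⁻¹ • A)⁻¹ i i)) atTop
      (𝓝 (⨆ (ε : ℝ) (_ : 0 < ε), ENNReal.ofReal ((M + ε • 1)⁻¹ i i))) := by
  obtain ⟨α, hα, hαA⟩ := hA.exists_smul_one_le
  obtain ⟨β, hβ, hAβ⟩ := hA.exists_le_smul_one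
  have hlim (r : ℝ) (hr : 0 < r) : Tendsto (fun t : ℝ => ENNReal.ofReal ((M + (t⁻¹ * r) • 1)⁻¹ i i))
      atTop (𝓝 (⨆ (ε : ℝ) (_ : 0 < ε), ENNReal.ofReal ((M + ε • 1)⁻¹ i i))) := by
    have hscale : Tendsto (fun t : ℝ => t⁻¹ * r) atTop (𝓝[>] 0) :=
      (tendsto_inv_atTop_nhdsGT_zero.comp (tendsto_id.atTop_div_const hr)).congr fun t => by
        simp [div_eq_inv_mul]
    exact (hM.tendsto_ofReal_inv_add_smul_one_apply i).comp hscale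
  refine tendsto_of_tendsto_of_tendsto_of_le_of_le' (hlim β hβ) (hlim α hα) ?_ ?_ <;>
    filter_upwards [eventually_gt_atTop 0] with t ht <;>
    refine ENNReal.ofReal_le_ofReal (hM.inv_add_apply_anti ?_ ?_ i)
  · exact hA.smul (inv_pos.mpr ht)
  · rw [mul_smul]
    exact smul_le_smul_of_nonneg_left hAβ (inv_nonneg.mpr ht.le)
  · exact PosDef.one.smul (mul_pos (inv_pos.mpr ht) hα)
  · rw [mul_smul]
    exact smul_le_smul_of_nonneg_left hαA (inv_nonneg.mpr ht.le)

theorem PosDef.tendsto_inv_add_inv_smul_apply (hM : M.PosDef) (A : Matrix n n ℝ) (i : n) :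
    Tendsto (fun t : ℝ => (M + t⁻¹ • A)⁻¹ i i) atTop (𝓝 (M⁻¹ i i)) := by
  have hinv : ContinuousAt Inv.inv M :=
    continuousAt_matrix_inv M (by simpa using continuousAt_inv₀ hM.det_pos.ne')
  have hpath : Tendsto (fun t : ℝ => M + t⁻¹ • A) atTop (𝓝 M) := by
    simpa using tendsto_const_nhds.add ((tendsto_inv_atTop_zero (𝕜 := ℝ)).smul_const A)
  exact ((continuous_apply_apply i i).tendsto _).comp (hinv.tendsto.comp hpath)

end Real

end Matrix

namespace LearningTraps

variable {K N : ℕ}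

theorem infoMat_posSemidef_s14 (c : Fin N → Fin K → ℝ) {l : Fin N → ℝ} (hl : ∀ i, 0 ≤ l i) :
    (infoMat c l).PosSemidef :=
  Matrix.posSemidef_sum _ fun i _ => by
    simpa using (Matrix.posSemidef_vecMulVec_self_star (c i)).smul (hl i)

theorem infoMat_smul (c : Fin N → Fin K → ℝ) (l : Fin N → ℝ) (t : ℝ) :
    infoMat c (t • l) = t • infoMat c l := by
  simp [infoMat, Finset.smul_sum, mul_smul]

theorem mul_postVar_smul (hK : 0 < K) (c : Fin N → Fin K → ℝ) {Cov : Matrix (Fin K) (Fin K) ℝ}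
    (hCov : Cov.PosDef) {l : Fin N → ℝ} (hl : ∀ i, 0 ≤ l i) {t : ℝ} (ht : 0 < t) :
    t * postVar hK c Cov (t • l) = (infoMat c l + t⁻¹ • Cov⁻¹)⁻¹ ⟨0, hK⟩ ⟨0, hK⟩ := by
  have hdet : IsUnit (infoMat c l + t⁻¹ • Cov⁻¹).det :=
    (Matrix.PosDef.posSemidef_add (infoMat_posSemidef_s14 c hl)
      (hCov.inv.smul (inv_pos.mpr ht))).isUnit.map Matrix.detMonoidHom
  have : Invertible t := invertibleOfNonzero ht.ne'
  have hscale : Cov⁻¹ + infoMat c (t • l) = t • (infoMat c l + t⁻¹ • Cov⁻¹) := by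
    rw [infoMat_smul, smul_add, smul_smul, mul_inv_cancel₀ ht.ne', one_smul, add_comm]
  rw [postVar, hscale, Matrix.inv_smul _ _ hdet, Matrix.smul_apply, invOf_eq_inv, smul_eq_mul,
    ← mul_assoc, mul_inv_cancel₀ ht.ne', one_mul]

theorem asymptotic_variance_general {K N : ℕ} (hK : 0 < K)
    (c : Fin N → Fin K → ℝ)
    (Cov : Matrix (Fin K) (Fin K) ℝ) (hCov : Cov.PosDef)
    (l : Fin N → ℝ) (hl : ∀ i, 0 ≤ l i) :
    Filter.Tendsto
      (fun t : ℝ => ENNReal.ofReal (t * postVar hK c Cov (t • l)))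
      Filter.atTop (𝓝 (Vstar hK c l)) ∧
    ((infoMat c l).PosDef →
      Filter.Tendsto (fun t : ℝ => t * postVar hK c Cov (t • l))
        Filter.atTop (𝓝 ((infoMat c l)⁻¹ ⟨0, hK⟩ ⟨0, hK⟩))) := by
  have hrescale : (fun t : ℝ => (infoMat c l + t⁻¹ • Cov⁻¹)⁻¹ ⟨0, hK⟩ ⟨0, hK⟩) =ᶠ[atTop]
      fun t => t * postVar hK c Cov (t • l) := by
    filter_upwards [eventually_gt_atTop 0] with t ht
    exact (mul_postVar_smul hK c hCov hl ht).symm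
  refine ⟨?_, fun hM => ?_⟩
  · exact ((infoMat_posSemidef_s14 c hl).tendsto_ofReal_inv_add_inv_smul_apply hCov.inv
      ⟨0, hK⟩).congr' (hrescale.fun_comp ENNReal.ofReal)
  · exact (hM.tendsto_inv_add_inv_smul_apply Cov⁻¹ ⟨0, hK⟩).congr' hrescale

/-- `t·V_{Σ⁰}(t·λ)` converges to `V*(λ)` in `[0,∞]` as the real parameter
`t → ∞`; if `Σᵢ λᵢcᵢcᵢᵀ` is positive definite the limit is `[(Σᵢ λᵢcᵢcᵢᵀ)⁻¹]₁₁`,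
independently of the prior. -/
theorem asymptotic_variance {K N : ℕ} (hK : 0 < K) (hN : 0 < N)
    (c : Fin N → Fin K → ℝ)
    (Cov : Matrix (Fin K) (Fin K) ℝ) (hCov : Cov.PosDef)
    (l : Fin N → ℝ) (hl : ∀ i, 0 ≤ l i) :
    Filter.Tendsto
      (fun t : ℝ => ENNReal.ofReal (t * postVar hK c Cov (t • l)))
      Filter.atTop (𝓝 (Vstar hK c l)) ∧
    ((infoMat c l).PosDef →
      Filter.Tendsto (fun t : ℝ => t * postVar hK c Cov (t • l))
        Filter.atTop (𝓝 ((infoMat c l)⁻¹ ⟨0, hK⟩ ⟨0, hK⟩))) :=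
  asymptotic_variance_general hK c Cov hCov l hl

end LearningTraps
end
end

section
/- Suppose N ≥ K, the vectors c₁, …, c_K are linearly independent, and, letting C* be the K×K matrix whose rows are c₁ᵀ, …, c_Kᵀ, suppose β_j := [(C*)⁻¹]_{1j} > 0 for every j ∈ {1,…,K} (equivalently, e₁ = Σ_{j=1}^K β_j·c_j with all β_j > 0). Suppose further that S* = {1,…,K} uniquely minimizes φ among all minimally spanning subsets of {1,…,N}. Then for every i > K, writing cᵢ = Σ_{j=1}^K α_j·c_j (which is the unique such representation), one has |Σ_{j=1}^K α_j| < 1. -/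
open Matrix Finset Filter Topology

noncomputable section

namespace LearningTraps

variable {K N : ℕ}

/-! Suppose `|∑ αⱼ| ≥ 1` and let `σ` be its sign. Pivot `cᵢ` into `S*` in place of the `c_{j₀}`
minimising `βⱼ / (σ αⱼ)` over `σ αⱼ > 0`: with `t = β_{j₀} / α_{j₀}`, the representation
`e₁ = t cᵢ + ∑ⱼ (βⱼ - t αⱼ) cⱼ` has nonnegative coefficients on `S*` and vanishes at `j₀`. Its
support is then a minimally spanning set other than `S*` (it contains `i`), and its `φ` is
`|t| + ∑ βⱼ - t ∑ αⱼ ≤ ∑ βⱼ = φ(S*)`, against unique minimality. -/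

theorem _root_.LinearIndepOn.eq_zero_of_sum_smul_mem_span {ι R M : Type*} [Ring R]
    [AddCommGroup M] [Module R M] [DecidableEq ι] {v : ι → M} {s : Finset ι}
    (hv : LinearIndepOn R v ↑s) {j : ι} (hj : j ∈ s) {a : ι → R}
    (h : ∑ m ∈ s, a m • v m ∈ Submodule.span R (v '' ↑(s.erase j))) : a j = 0 := by
  have hrest : ∑ m ∈ s.erase j, a m • v m ∈ Submodule.span R (v '' ↑(s.erase j)) :=
    Submodule.sum_mem _ fun m hm => Submodule.smul_mem _ _ (Submodule.subset_span ⟨m, hm, rfl⟩)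
  rw [← add_sum_erase s _ hj, Submodule.add_mem_iff_left _ hrest] at h
  exact hv.eq_zero_of_smul_mem_span hj _ (by rwa [← coe_erase])

theorem _root_.LinearIndepOn.insert_erase {ι K V : Type*} [DivisionRing K] [AddCommGroup V]
    [Module K V] [DecidableEq ι] {v : ι → V} {s : Finset ι} (hv : LinearIndepOn K v ↑s)
    {i j : ι} (hj : j ∈ s) {a : ι → K} (hvi : v i = ∑ m ∈ s, a m • v m) (haj : a j ≠ 0) :
    LinearIndepOn K v ↑(insert i (s.erase j)) := by
  rw [coe_insert]
  exact (hv.mono (coe_subset.mpr (erase_subset j s))).insert fun hmem =>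
    haj (hv.eq_zero_of_sum_smul_mem_span hj (hvi ▸ hmem))

theorem _root_.Matrix.sum_inv_apply_smul_row {n R : Type*} [Fintype n] [DecidableEq n]
    [CommRing R] (A : Matrix n n R) (hA : IsUnit A.det) (k : n) :
    ∑ j, A⁻¹ k j • A j = Pi.single k 1 := by
  rw [← vecMul_eq_sum]
  calc A⁻¹ k ᵥ* A = (A⁻¹ * A) k := rfl
    _ = Pi.single k 1 := by
      ext j
      rw [nonsing_inv_mul A hA, one_apply, Pi.single_apply]
      simp only [eq_comm]

theorem _root_.Function.Injective.sum_image_extend {ι ι' R M : Type*} [Fintype ι]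
    [DecidableEq ι'] [Zero R] [AddCommMonoid M] {f : ι → ι'} (hf : f.Injective) (b : ι → R)
    (g : ι' → R → M) :
    ∑ m ∈ univ.image f, g m (Function.extend f b 0 m) = ∑ j, g (f j) (b j) := by
  rw [sum_image hf.injOn]
  simp only [hf.extend_apply]

section RatioTest

variable {ι 𝕜 : Type*} [Field 𝕜] [LinearOrder 𝕜] [IsStrictOrderedRing 𝕜] {s : Finset ι}
  {α β : ι → 𝕜}

theorem exists_min_ratio (hβ : ∀ j ∈ s, 0 < β j) (hα : ∃ j ∈ s, 0 < α j) :
    ∃ t > 0, ∃ j₀ ∈ s, t * α j₀ = β j₀ ∧ ∀ j ∈ s, t * α j ≤ β j := by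
  classical
  obtain ⟨j₀, hj₀, hmin⟩ := (s.filter (0 < α ·)).exists_min_image (fun j => β j / α j)
    (let ⟨j, hj, hpos⟩ := hα; ⟨j, mem_filter.mpr ⟨hj, hpos⟩⟩)
  obtain ⟨hj₀s, hαj₀⟩ := mem_filter.mp hj₀
  refine ⟨β j₀ / α j₀, div_pos (hβ j₀ hj₀s) hαj₀, j₀, hj₀s, div_mul_cancel₀ _ hαj₀.ne', ?_⟩
  intro j hj
  rcases lt_or_ge 0 (α j) with hαj | hαj
  · exact (le_div_iff₀ hαj).mp (hmin j (mem_filter.mpr ⟨hj, hαj⟩))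
  · exact (mul_nonpos_of_nonneg_of_nonpos (div_pos (hβ j₀ hj₀s) hαj₀).le hαj).trans
      (hβ j hj).le

theorem exists_ratio_of_one_le_abs_sum (hβ : ∀ j ∈ s, 0 < β j) (h : 1 ≤ |∑ j ∈ s, α j|) :
    ∃ t, ∃ j₀ ∈ s, t * α j₀ = β j₀ ∧ (∀ j ∈ s, t * α j ≤ β j) ∧
      |t| ≤ t * ∑ j ∈ s, α j := by
  rcases le_abs'.mp h with hneg | hpos
  · obtain ⟨j, hj, hαj⟩ : ∃ j ∈ s, 0 < -α j :=
      exists_lt_of_sum_lt (by simpa using (by linarith : ∑ j ∈ s, α j < 0))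
    obtain ⟨t, ht, j₀, hj₀, heq, hle⟩ := exists_min_ratio (α := (-α ·)) hβ ⟨j, hj, hαj⟩
    refine ⟨-t, j₀, hj₀, by linarith, fun j hj => by linarith [hle j hj], ?_⟩
    rw [abs_neg, abs_of_pos ht]
    nlinarith
  · obtain ⟨j, hj, hαj⟩ : ∃ j ∈ s, 0 < α j :=
      exists_lt_of_sum_lt (by simpa using (by linarith : 0 < ∑ j ∈ s, α j))
    obtain ⟨t, ht, j₀, hj₀, heq, hle⟩ := exists_min_ratio hβ ⟨j, hj, hαj⟩
    refine ⟨t, j₀, hj₀, heq, hle, ?_⟩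
    rw [abs_of_pos ht]
    nlinarith

end RatioTest

section Representations

variable {hK : 0 < K} {c : Fin N → Fin K → ℝ} {S : Finset (Fin N)} {β : Fin N → ℝ}

theorem isRep_iff :
    IsRep hK c S β ↔ (∀ m ∉ S, β m = 0) ∧ ∑ m ∈ S, β m • c m = e1 hK := by
  refine and_congr_right fun hzero => ?_
  rw [sum_subset (subset_univ S) fun m _ hm => by rw [hzero m hm, zero_smul]]

theorem IsRep.sum_smul_eq (hβ : IsRep hK c S β) : ∑ m ∈ S, β m • c m = e1 hK :=
  (isRep_iff.mp hβ).2

theorem IsRep.unique (hS : LinearIndepOn ℝ c ↑S) (hβ : IsRep hK c S β) {β' : Fin N → ℝ}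
    (hβ' : IsRep hK c S β') : β = β' := by
  have hdiff : ∀ m ∈ S, β m - β' m = 0 :=
    linearIndepOn_finset_iff.mp hS _ (by
      simp only [sub_smul, sum_sub_distrib, hβ.sum_smul_eq, hβ'.sum_smul_eq, sub_self])
  funext m
  by_cases hm : m ∈ S
  · exact sub_eq_zero.mp (hdiff m hm)
  · rw [hβ.1 m hm, hβ'.1 m hm]

theorem betaVec_eq (hS : LinearIndepOn ℝ c ↑S) (hβ : IsRep hK c S β) :
    betaVec hK c S = β := by
  have hex : ∃ b, IsRep hK c S b := ⟨β, hβ⟩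
  rw [betaVec, dif_pos hex]
  exact hex.choose_spec.unique hS hβ

theorem minSpanning_of_isRep (hS : LinearIndepOn ℝ c ↑S) (hβ : IsRep hK c S β)
    (hne : ∀ m ∈ S, β m ≠ 0) : MinSpanning hK c S := by
  refine ⟨?_, fun T hTS hT => ?_⟩
  · rw [Spanning, ← hβ.sum_smul_eq]
    exact Submodule.sum_mem _ fun m hm =>
      Submodule.smul_mem _ _ (Submodule.subset_span ⟨m, hm, rfl⟩)
  · obtain ⟨m, hmS, hmT⟩ := exists_of_ssubset hTS
    have hTm : T ⊆ S.erase m := fun x hx =>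
      mem_erase.mpr ⟨ne_of_mem_of_not_mem hx hmT, hTS.1 hx⟩
    refine hne m hmS (hS.eq_zero_of_sum_smul_mem_span hmS ?_)
    rw [hβ.sum_smul_eq]
    exact Submodule.span_mono (Set.image_mono (coe_subset.mpr hTm)) hT

theorem phi_eq_sum (hS : LinearIndepOn ℝ c ↑S) (hβ : IsRep hK c S β)
    (hβpos : ∀ m ∈ S, 0 < β m) : phi hK c S = ∑ m ∈ S, β m := by
  rw [phi, betaVec_eq hS hβ,
    ← sum_subset (subset_univ S) fun m _ hm => by rw [hβ.1 m hm, abs_zero]]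
  exact sum_congr rfl fun m hm => abs_of_pos (hβpos m hm)

end Representations

theorem abs_sum_lt_one_of_uniqueMin {hK : 0 < K} {c : Fin N → Fin K → ℝ} {S : Finset (Fin N)}
    {β : Fin N → ℝ} (hS : LinearIndepOn ℝ c ↑S) (hβ : IsRep hK c S β)
    (hβpos : ∀ m ∈ S, 0 < β m) (hUM : UniqueMin hK c S) {i : Fin N} (hi : i ∉ S)
    {a : Fin N → ℝ} (hci : c i = ∑ m ∈ S, a m • c m) : |∑ m ∈ S, a m| < 1 := by
  by_contra! h
  obtain ⟨t, j₀, hj₀, htj₀, hle, habs⟩ := exists_ratio_of_one_le_abs_sum hβpos h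
  have htj₀ne : t * a j₀ ≠ 0 := htj₀ ▸ (hβpos j₀ hj₀).ne'
  set γ : Fin N → ℝ := fun m => (if m ∈ S then β m - t * a m else 0) + if m = i then t else 0
  have hγ_sum : ∑ m, γ m • c m = e1 hK := by
    simp only [γ, add_smul, ite_smul, zero_smul, sum_add_distrib, sum_ite_mem, univ_inter,
      sum_ite_eq', mem_univ, if_true, sub_smul, sum_sub_distrib, mul_smul, ← smul_sum,
      hβ.sum_smul_eq, ← hci, sub_add_cancel]
  have hγ_abs :
      ∀ m, |γ m| = (if m ∈ S then β m - t * a m else 0) + if m = i then |t| else 0 := by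
    intro m
    by_cases hmi : m = i
    · subst hmi; simp [γ, hi]
    by_cases hmS : m ∈ S
    · simp [γ, hmS, hmi, abs_of_nonneg (sub_nonneg.mpr (hle m hmS))]
    · simp [γ, hmS, hmi]
  have hγ_supp : ∀ m, γ m ≠ 0 → m ∈ insert i (S.erase j₀) := by
    intro m hm
    by_contra hm'
    simp only [mem_insert, mem_erase, not_or, not_and_or, not_not] at hm'
    rcases hm' with ⟨hmi, rfl | hmS⟩
    · simp [γ, hj₀, hmi, htj₀] at hm
    · simp [γ, hmS, hmi] at hm
  set S' := univ.filter (γ · ≠ 0)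
  have hS' : LinearIndepOn ℝ c ↑S' := (hS.insert_erase hj₀ hci (right_ne_zero_of_mul htj₀ne)).mono
    fun m hm => hγ_supp m (mem_filter.mp hm).2
  have hrep' : IsRep hK c S' γ := ⟨fun m hm => by simpa [S'] using hm, hγ_sum⟩
  have hφ : phi hK c S' ≤ phi hK c S := by
    rw [phi_eq_sum hS hβ hβpos, phi, betaVec_eq hS' hrep']
    simp only [hγ_abs, sum_add_distrib, sum_ite_mem, univ_inter, sum_ite_eq', mem_univ, if_true,
      sum_sub_distrib, ← mul_sum]
    linarith
  have hiS' : i ∈ S' := by simpa [S', γ, hi] using left_ne_zero_of_mul htj₀ne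
  exact (hUM.2 S' (minSpanning_of_isRep hS' hrep' fun m hm => (mem_filter.mp hm).2)
    (fun h => hi (h ▸ hiS'))).not_ge hφ

/-- Crucial lemma. If `c₁,…,c_K` are linearly independent with
`β_j = [(C*)⁻¹]_{1j} > 0` and `S* = {1,…,K}` uniquely minimizes `φ` among minimally
spanning sets, then any other signal `cᵢ = Σⱼ αⱼcⱼ` has `|Σⱼ αⱼ| < 1`. -/
theorem crucial_linear_combination {K N : ℕ} (hK : 0 < K) (hKN : K ≤ N)
    (c : Fin N → Fin K → ℝ)
    (hli : LinearIndependent ℝ fun j : Fin K => c (Fin.castLE hKN j))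
    (hpos : ∀ j : Fin K,
      0 < (Matrix.of fun a b : Fin K => c (Fin.castLE hKN a) b)⁻¹ ⟨0, hK⟩ j)
    (hUM : UniqueMin hK c (Finset.image (Fin.castLE hKN) Finset.univ)) :
    ∀ i : Fin N, K ≤ (i : ℕ) →
      ∀ α : Fin K → ℝ, c i = ∑ j, α j • c (Fin.castLE hKN j) →
        |∑ j, α j| < 1 := by
  intro i hi α hα
  set S := image (Fin.castLE hKN) univ
  have hinj := Fin.castLE_injective hKN
  have hS : LinearIndepOn ℝ c ↑S := by
    rw [coe_image, coe_univ, Set.image_univ]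
    exact (linearIndepOn_range_iff hinj c).mpr hli
  set C := Matrix.of fun a b : Fin K => c (Fin.castLE hKN a) b
  have hC : IsUnit C.det :=
    (isUnit_iff_isUnit_det C).mp (linearIndependent_rows_iff_isUnit.mp hli)
  set β := Function.extend (Fin.castLE hKN) (C⁻¹ ⟨0, hK⟩) 0
  have hβ : IsRep hK c S β := by
    refine isRep_iff.mpr ⟨fun m hm => Function.extend_apply' _ _ _ fun ⟨j, hj⟩ =>
      hm (hj ▸ mem_image_of_mem _ (mem_univ j)), ?_⟩
    rw [hinj.sum_image_extend _ fun m r => r • c m]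
    exact C.sum_inv_apply_smul_row hC ⟨0, hK⟩
  have hiS : i ∉ S := by
    simp only [S, mem_image, mem_univ, true_and, not_exists, Fin.ext_iff, Fin.val_castLE]
    omega
  have hβpos : ∀ m ∈ S, 0 < β m :=
    forall_mem_image.mpr fun j _ => by simpa only [β, hinj.extend_apply] using hpos j
  have hci : c i = ∑ m ∈ S, Function.extend (Fin.castLE hKN) α 0 m • c m := by
    rwa [hinj.sum_image_extend _ fun m r => r • c m]
  have := abs_sum_lt_one_of_uniqueMin hS hβ hβpos hUM hiS hci
  rwa [hinj.sum_image_extend _ fun _ r => r] at this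

end LearningTraps
end
end
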